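/- Let A ∈ ℝ^{m×n} have full column rank, with rows a₁ᵀ, ..., a_mᵀ, each nonzero. Fix t > 0 and let D = t · diag(‖a₁‖^{-1}, ..., ‖a_m‖^{-1}) ∈ ℝ^{m×m}. Then κ(DA) ≤ √m · min{κ(D₀ A) : D₀ ∈ ℝ^{m×m} an invertible diagonal matrix}, where for a full-column-rank matrix B, κ(B) denotes the ratio of its largest singular value to its smallest singular value. -/
import Mathlib

open scoped Matrix

/-- The condition number of a full-column-rank matrix `B`: the ratio of its largest
singular value (the supremum of `‖B x‖` over unit vectors `x`) to its smallest
singular value (the corresponding infimum). -/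
noncomputable def condNum {m n : ℕ} (B : Matrix (Fin m) (Fin n) ℝ) : ℝ :=
  (⨆ x : Metric.sphere (0 : EuclideanSpace ℝ (Fin n)) 1, ‖Matrix.toEuclideanLin B x‖) /
  (⨅ x : Metric.sphere (0 : EuclideanSpace ℝ (Fin n)) 1, ‖Matrix.toEuclideanLin B x‖)

lemma vds_norm {m n : ℕ} (B : Matrix (Fin m) (Fin n) ℝ) (x : EuclideanSpace ℝ (Fin n)) :
    ‖Matrix.toEuclideanLin B x‖ = Real.sqrt (∑ i, (B.mulVec (WithLp.equiv 2 _ x) i)^2) := by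
  rw [Matrix.toEuclideanLin_apply, EuclideanSpace.norm_eq]
  congr 1
  refine Finset.sum_congr rfl fun i _ => ?_
  rw [Real.norm_eq_abs, sq_abs]; rfl

lemma vds_inj {m n : ℕ} (A : Matrix (Fin m) (Fin n) ℝ) (h : A.rank = n) :
    Function.Injective A.mulVec := by
  rw [← Matrix.coe_mulVecLin, ← LinearMap.ker_eq_bot]
  have h2 := LinearMap.finrank_range_add_finrank_ker A.mulVecLin
  rw [Matrix.rank] at h
  rw [h] at h2
  simp only [Module.finrank_pi, Fintype.card_fin] at h2
  exact Submodule.finrank_eq_zero.mp (by omega)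

lemma vds_diag_mulVec {m n : ℕ} (d : Fin m → ℝ) (A : Matrix (Fin m) (Fin n) ℝ)
    (v : Fin n → ℝ) (i : Fin m) :
    (Matrix.diagonal d * A).mulVec v i = d i * A.mulVec v i := by
  simp [Matrix.mulVec, dotProduct, Matrix.diagonal_mul, Finset.mul_sum, mul_assoc]

/-- **van der Sluis's theorem.** Let `A ∈ ℝ^{m×n}` have full column rank with nonzero
rows `a₁ᵀ, …, a_mᵀ`, fix `t > 0`, and let `D = t ⬝ diag(‖a₁‖⁻¹, …, ‖a_m‖⁻¹)`.
Then `κ(D A) ≤ √m ⬝ κ(D₀ A)` for every invertible diagonal matrix `D₀`; i.e. scaling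
all rows to equal norm is within `√m` of the optimal diagonal scaling. -/
theorem stmt_5 (m n : ℕ) (A : Matrix (Fin m) (Fin n) ℝ) (hrank : A.rank = n)
    (hrows : ∀ i, A i ≠ 0) (t : ℝ) (ht : 0 < t)
    (D : Matrix (Fin m) (Fin m) ℝ)
    (hD : D = Matrix.diagonal fun i => t * (Real.sqrt (∑ j, (A i j) ^ 2))⁻¹) :
    ∀ D₀ : Matrix (Fin m) (Fin m) ℝ, D₀.IsDiag → IsUnit D₀ →
      condNum (D * A) ≤ Real.sqrt m * condNum (D₀ * A) := by
  intro D₀ hdiag hunit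
  rcases Nat.eq_zero_or_pos n with hn0 | hn
  · subst hn0
    haveI : IsEmpty (Metric.sphere (0 : EuclideanSpace ℝ (Fin 0)) 1) := by
      constructor
      rintro ⟨x, hx⟩
      rw [Metric.mem_sphere, Subsingleton.elim x 0, dist_self] at hx
      norm_num at hx
    simp [condNum, Real.iSup_of_isEmpty, Real.iInf_of_isEmpty]
  -- basic setup
  have hm : 0 < m := by
    have := Matrix.rank_le_card_height A
    simp only [Fintype.card_fin] at this
    omega
  haveI : Nonempty (Fin n) := ⟨⟨0, hn⟩⟩
  haveI : Nonempty (Fin m) := ⟨⟨0, hm⟩⟩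
  set r : Fin m → ℝ := fun i => Real.sqrt (∑ j, (A i j) ^ 2) with hr_def
  have hr : ∀ i, 0 < r i := by
    intro i
    apply Real.sqrt_pos.mpr
    obtain ⟨j, hj⟩ := Function.ne_iff.mp (hrows i)
    refine Finset.sum_pos' (fun j _ => sq_nonneg _) ⟨j, Finset.mem_univ j, ?_⟩
    exact lt_of_le_of_ne (sq_nonneg _) (Ne.symm (pow_ne_zero 2 hj))
  have hrsq : ∀ i, r i ^ 2 = ∑ j, (A i j) ^ 2 := fun i =>
    Real.sq_sqrt (Finset.sum_nonneg fun j _ => sq_nonneg _)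
  set d : Fin m → ℝ := fun i => D₀ i i with hd_def
  have hD₀eq : D₀ = Matrix.diagonal d := (Matrix.IsDiag.diagonal_diag hdiag).symm
  -- the maximum M
  set M : ℝ := Finset.univ.sup' Finset.univ_nonempty (fun i => |d i| * r i) with hM_def
  have hMle : ∀ i, |d i| * r i ≤ M := fun i =>
    Finset.le_sup' (f := fun i => |d i| * r i) (Finset.mem_univ i)
  obtain ⟨i₀, -, hMi₀⟩ := Finset.exists_mem_eq_sup' Finset.univ_nonempty
    (fun i => |d i| * r i)
  rw [← hM_def] at hMi₀
  -- injectivity of D₀ * A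
  have hinjD₀ : Function.Injective D₀.mulVec := Matrix.mulVec_injective_iff_isUnit.mpr hunit
  have hinjA : Function.Injective A.mulVec := vds_inj A hrank
  have hinj : Function.Injective (D₀ * A).mulVec := by
    intro u v huv
    apply hinjA
    apply hinjD₀
    simpa [Matrix.mulVec_mulVec] using huv
  -- each d i ≠ 0
  have hd0 : ∀ i, d i ≠ 0 := by
    have hdet := (Matrix.isUnit_iff_isUnit_det D₀).mp hunit
    rw [hD₀eq, Matrix.det_diagonal] at hdet
    intro i
    exact Finset.prod_ne_zero_iff.mp hdet.ne_zero i (Finset.mem_univ i)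
  have hMpos : 0 < M := lt_of_lt_of_le (by
    have h1 := hr i₀
    have h2 := abs_pos.mpr (hd0 i₀)
    positivity) (hMle i₀)
  -- unfold the goal
  unfold condNum
  set sph := Metric.sphere (0 : EuclideanSpace ℝ (Fin n)) 1 with hsph
  haveI hne : Nonempty sph := (NormedSpace.sphere_nonempty.mpr zero_le_one).coe_sort
  have hnes : sph.Nonempty := NormedSpace.sphere_nonempty.mpr zero_le_one
  have hcompact : IsCompact sph := isCompact_sphere _ _
  have hcontg : Continuous fun x : EuclideanSpace ℝ (Fin n) =>
      ‖Matrix.toEuclideanLin (D₀ * A) x‖ :=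
    (LinearMap.continuous_of_finiteDimensional _).norm
  -- norm-one vectors: coordinates sum of squares = 1
  have hsum1 : ∀ x : sph, ∑ j, ((WithLp.equiv 2 (Fin n → ℝ)) (x : EuclideanSpace ℝ (Fin n)) j) ^ 2 = 1 := by
    rintro ⟨x, hx⟩
    rw [hsph, Metric.mem_sphere, dist_zero_right, EuclideanSpace.norm_eq] at hx
    have := Real.sqrt_eq_one.mp hx
    simpa [Real.norm_eq_abs, sq_abs] using this
  -- Step 1: sup bound for D*A
  have step1 : ∀ x : sph, ‖Matrix.toEuclideanLin (D * A) (x : EuclideanSpace ℝ (Fin n))‖ ≤ t * Real.sqrt m := by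
    intro x
    rw [vds_norm]
    have hb : ∀ i, ((D * A).mulVec ((WithLp.equiv 2 (Fin n → ℝ)) (x : EuclideanSpace ℝ (Fin n))) i) ^ 2 ≤ t ^ 2 := by
      intro i
      set v := (WithLp.equiv 2 (Fin n → ℝ)) (x : EuclideanSpace ℝ (Fin n)) with hv
      rw [hD, vds_diag_mulVec]
      have hcs : (A.mulVec v i) ^ 2 ≤ r i ^ 2 := by
        have hsc := Finset.sum_mul_sq_le_sq_mul_sq Finset.univ (fun j => A i j) v
        rw [hrsq i]
        calc (A.mulVec v i) ^ 2 = (∑ j, A i j * v j) ^ 2 := rfl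
          _ ≤ (∑ j, (A i j) ^ 2) * (∑ j, (v j) ^ 2) := hsc
          _ = ∑ j, (A i j) ^ 2 := by rw [hsum1 x, mul_one]
      have hri := hr i
      calc (t * (r i)⁻¹ * A.mulVec v i) ^ 2
          = (t * (r i)⁻¹) ^ 2 * (A.mulVec v i) ^ 2 := by ring
        _ ≤ (t * (r i)⁻¹) ^ 2 * r i ^ 2 := by
            apply mul_le_mul_of_nonneg_left hcs (by positivity)
        _ = t ^ 2 := by field_simp
    calc Real.sqrt (∑ i, ((D * A).mulVec _ i) ^ 2)
        ≤ Real.sqrt (∑ _i : Fin m, t ^ 2) := by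
          apply Real.sqrt_le_sqrt
          exact Finset.sum_le_sum fun i _ => hb i
      _ = t * Real.sqrt m := by
          rw [Finset.sum_const, Finset.card_univ, Fintype.card_fin, nsmul_eq_mul,
            Real.sqrt_mul (by positivity), Real.sqrt_sq ht.le, mul_comm]
  -- Step 2: pointwise lower bound relating D*A and D₀*A
  have step2 : ∀ x : sph, (t / M) * ‖Matrix.toEuclideanLin (D₀ * A) (x : EuclideanSpace ℝ (Fin n))‖
      ≤ ‖Matrix.toEuclideanLin (D * A) (x : EuclideanSpace ℝ (Fin n))‖ := by
    intro x
    rw [vds_norm, vds_norm]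
    set v := (WithLp.equiv 2 (Fin n → ℝ)) (x : EuclideanSpace ℝ (Fin n)) with hv
    have htM : 0 < t / M := by positivity
    rw [← Real.sqrt_sq htM.le, ← Real.sqrt_mul (by positivity)]
    apply Real.sqrt_le_sqrt
    rw [Finset.mul_sum]
    apply Finset.sum_le_sum
    intro i _
    rw [hD, vds_diag_mulVec, hD₀eq, vds_diag_mulVec]
    have hri := hr i
    have key : (t / M) * |d i| ≤ t * (r i)⁻¹ := by
      rw [div_mul_eq_mul_div, div_le_iff₀ hMpos]
      calc t * |d i| = t * (r i)⁻¹ * (|d i| * r i) := by field_simp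
        _ ≤ t * (r i)⁻¹ * M := by
            apply mul_le_mul_of_nonneg_left (hMle i) (by positivity)
    calc (t / M) ^ 2 * (d i * A.mulVec v i) ^ 2
        = ((t / M) * |d i|) ^ 2 * (A.mulVec v i) ^ 2 := by
          rw [mul_pow, mul_pow, sq_abs]; ring
      _ ≤ (t * (r i)⁻¹) ^ 2 * (A.mulVec v i) ^ 2 := by
          apply mul_le_mul_of_nonneg_right _ (sq_nonneg _)
          exact pow_le_pow_left₀ (by positivity) key 2
      _ = (t * (r i)⁻¹ * A.mulVec v i) ^ 2 := by ring
  -- Step 3: lower bound on sup for D₀*A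
  have step3 : ∃ x : sph, M ≤ ‖Matrix.toEuclideanLin (D₀ * A) (x : EuclideanSpace ℝ (Fin n))‖ := by
    set u : Fin n → ℝ := fun j => A i₀ j / r i₀ with hu
    have hri₀ := hr i₀
    have hnormu : ∑ j, (u j) ^ 2 = 1 := by
      simp only [hu, div_pow]
      rw [← Finset.sum_div, ← hrsq i₀]
      field_simp
    have hxmem : (WithLp.equiv 2 (Fin n → ℝ)).symm u ∈ sph := by
      rw [hsph, Metric.mem_sphere, dist_zero_right, EuclideanSpace.norm_eq]
      rw [show (∑ j, ‖(WithLp.equiv 2 (Fin n → ℝ)).symm u j‖ ^ 2) = ∑ j, (u j)^2 from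
        Finset.sum_congr rfl fun j _ => by rw [Real.norm_eq_abs, sq_abs]; rfl]
      rw [hnormu, Real.sqrt_one]
    refine ⟨⟨_, hxmem⟩, ?_⟩
    rw [vds_norm]
    have hvu : (WithLp.equiv 2 (Fin n → ℝ)) ((WithLp.equiv 2 (Fin n → ℝ)).symm u) = u :=
      (WithLp.equiv 2 (Fin n → ℝ)).apply_symm_apply u
    rw [hvu]
    have hAv : A.mulVec u i₀ = r i₀ := by
      show ∑ j, A i₀ j * u j = r i₀
      have h1 : ∑ j, A i₀ j * u j = (∑ j, (A i₀ j) ^ 2) / r i₀ := by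
        rw [Finset.sum_div]
        exact Finset.sum_congr rfl fun j _ => by rw [hu]; ring
      rw [h1, ← hrsq i₀, sq, mul_div_assoc, div_self hri₀.ne', mul_one]
    have hsingle : ((D₀ * A).mulVec u i₀) ^ 2 ≤ ∑ i, ((D₀ * A).mulVec u i) ^ 2 :=
      Finset.single_le_sum (f := fun i => ((D₀ * A).mulVec u i) ^ 2)
        (fun i _ => sq_nonneg _) (Finset.mem_univ i₀)
    calc M = |d i₀| * r i₀ := hMi₀
      _ = |(D₀ * A).mulVec u i₀| := by
          rw [hD₀eq, vds_diag_mulVec, hAv, abs_mul, abs_of_pos hri₀]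
      _ = Real.sqrt (((D₀ * A).mulVec u i₀) ^ 2) := (Real.sqrt_sq_eq_abs _).symm
      _ ≤ _ := Real.sqrt_le_sqrt hsingle
  -- bounds on sup and inf
  have hbddg : BddAbove (Set.range fun x : sph => ‖Matrix.toEuclideanLin (D₀ * A) (x : EuclideanSpace ℝ (Fin n))‖) := by
    obtain ⟨x₂, hx₂mem, hx₂⟩ := hcompact.exists_isMaxOn hnes hcontg.continuousOn
    exact ⟨_, by rintro _ ⟨x, rfl⟩; exact hx₂ x.2⟩
  have hbddbelow : BddBelow (Set.range fun x : sph => ‖Matrix.toEuclideanLin (D₀ * A) (x : EuclideanSpace ℝ (Fin n))‖) :=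
    ⟨0, by rintro _ ⟨x, rfl⟩; exact norm_nonneg _⟩
  have hinjE : Function.Injective (Matrix.toEuclideanLin (D₀ * A)) := by
    intro a b hab
    rw [Matrix.toEuclideanLin_apply, Matrix.toEuclideanLin_apply] at hab
    have h1 := (WithLp.equiv 2 (Fin m → ℝ)).symm.injective hab
    have h2 := hinj h1
    exact (WithLp.equiv 2 (Fin n → ℝ)).injective h2
  have hI'pos : 0 < ⨅ x : sph, ‖Matrix.toEuclideanLin (D₀ * A) (x : EuclideanSpace ℝ (Fin n))‖ := by
    obtain ⟨x₁, hx₁mem, hx₁⟩ := hcompact.exists_isMinOn hnes hcontg.continuousOn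
    have hx₁ne : (x₁ : EuclideanSpace ℝ (Fin n)) ≠ 0 := by
      rw [hsph, Metric.mem_sphere, dist_zero_right] at hx₁mem
      intro h; rw [h, norm_zero] at hx₁mem; norm_num at hx₁mem
    have hpos : 0 < ‖Matrix.toEuclideanLin (D₀ * A) x₁‖ := by
      rw [norm_pos_iff]
      intro h
      exact hx₁ne (hinjE (h.trans (map_zero _).symm))
    exact lt_of_lt_of_le hpos (le_ciInf fun x => (isMinOn_iff.mp hx₁) x x.2)
  set S := ⨆ x : sph, ‖Matrix.toEuclideanLin (D * A) (x : EuclideanSpace ℝ (Fin n))‖ with hS_def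
  set I := ⨅ x : sph, ‖Matrix.toEuclideanLin (D * A) (x : EuclideanSpace ℝ (Fin n))‖ with hI_def
  set S' := ⨆ x : sph, ‖Matrix.toEuclideanLin (D₀ * A) (x : EuclideanSpace ℝ (Fin n))‖ with hS'_def
  set I' := ⨅ x : sph, ‖Matrix.toEuclideanLin (D₀ * A) (x : EuclideanSpace ℝ (Fin n))‖ with hI'_def
  have hS : S ≤ t * Real.sqrt m := ciSup_le step1
  have hI : (t / M) * I' ≤ I := by
    apply le_ciInf
    intro x
    calc (t / M) * I' ≤ (t / M) * ‖Matrix.toEuclideanLin (D₀ * A) (x : EuclideanSpace ℝ (Fin n))‖ := by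
          apply mul_le_mul_of_nonneg_left (ciInf_le hbddbelow x) (by positivity)
      _ ≤ _ := step2 x
  have hS' : M ≤ S' := by
    obtain ⟨x₃, hx₃⟩ := step3
    exact hx₃.trans (le_ciSup hbddg x₃)
  have hS'pos : 0 < S' := lt_of_lt_of_le hMpos hS'
  have hIpos : 0 < I := lt_of_lt_of_le (mul_pos (div_pos ht hMpos) hI'pos) hI
  calc S / I ≤ (t * Real.sqrt m) / ((t / M) * I') := by
        exact div_le_div₀ (by positivity) hS (mul_pos (div_pos ht hMpos) hI'pos) hI
    _ = Real.sqrt m * (M / I') := by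
        field_simp
    _ ≤ Real.sqrt m * (S' / I') := by
        apply mul_le_mul_of_nonneg_left _ (Real.sqrt_nonneg _)
        exact (div_le_div_iff_of_pos_right hI'pos).mpr hS'
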